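/- For n ≥ 5, in the group M_n the element α₀ = σ₁⋯σ_{n-1} has order n, the element α₁ = σ₁⋯σ_{n-2} has order n−1, and the element α₂ = σ₁⋯σ_{n-3}σ_{n-2}² has order n−2. -/

import Mathlib

/-!
The mapping class group `M n` of the `n`-punctured sphere, presented with
generators `σ₁, …, σ_{n-1}` and relations:
`σᵢσⱼ = σⱼσᵢ` for `|i - j| ≥ 2`; `σᵢσⱼσᵢ = σⱼσᵢσⱼ` for `|i - j| = 1`;
`σ₁⋯σ_{n-1} σ_{n-1}⋯σ₁ = 1`; `(σ₁⋯σ_{n-1})ⁿ = 1`.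
-/

namespace SphereMCG

/-- Generators: `i : Fin (n-1)` is the half-twist `σ_{i+1}`. -/
abbrev Gen (n : ℕ) := Fin (n - 1)

/-- The generator `σ_i` (for `1 ≤ i ≤ n - 1`) as an element of the free group. -/
def σf (n : ℕ) (i : ℕ) : FreeGroup (Gen n) :=
  if h : 1 ≤ i ∧ i ≤ n - 1 then FreeGroup.of (⟨i - 1, by omega⟩ : Gen n) else 1

/-- The word `σ_a σ_{a+1} ⋯ σ_b` in the free group. -/
def σfProd (n : ℕ) (a b : ℕ) : FreeGroup (Gen n) :=
  ((List.range' a (b + 1 - a)).map (σf n)).prod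

/-- The word `σ_b σ_{b-1} ⋯ σ_a` in the free group. -/
def σfProdRev (n : ℕ) (a b : ℕ) : FreeGroup (Gen n) :=
  ((List.range' a (b + 1 - a)).reverse.map (σf n)).prod

/-- The defining relations of the mapping class group of the `n`-punctured sphere. -/
def rels (n : ℕ) : Set (FreeGroup (Gen n)) :=
  { r | (∃ i j, 1 ≤ i ∧ i ≤ n - 1 ∧ 1 ≤ j ∧ j ≤ n - 1 ∧ (i + 2 ≤ j ∨ j + 2 ≤ i) ∧
          r = σf n i * σf n j * (σf n j * σf n i)⁻¹)
      ∨ (∃ i j, 1 ≤ i ∧ i ≤ n - 1 ∧ 1 ≤ j ∧ j ≤ n - 1 ∧ (i + 1 = j ∨ j + 1 = i) ∧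
          r = σf n i * σf n j * σf n i * (σf n j * σf n i * σf n j)⁻¹)
      ∨ r = σfProd n 1 (n - 1) * σfProdRev n 1 (n - 1)
      ∨ r = (σfProd n 1 (n - 1)) ^ n }

/-- The mapping class group of the `n`-punctured sphere, by its standard presentation. -/
abbrev M (n : ℕ) := PresentedGroup (rels n)

/-- The half-twist `σ_i` in `M n`. -/
def σ (n : ℕ) (i : ℕ) : M n := PresentedGroup.mk (rels n) (σf n i)

/-- `α₀ = σ₁ ⋯ σ_{n-1}` in `M n`. -/
def α₀ (n : ℕ) : M n := PresentedGroup.mk (rels n) (σfProd n 1 (n - 1))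

/-- `α₁ = σ₁ ⋯ σ_{n-2}` in `M n`. -/
def α₁ (n : ℕ) : M n := PresentedGroup.mk (rels n) (σfProd n 1 (n - 2))

/-- `α₂ = σ₁ ⋯ σ_{n-3} σ_{n-2}²` in `M n`. -/
def α₂ (n : ℕ) : M n := PresentedGroup.mk (rels n) (σfProd n 1 (n - 2) * σf n (n - 2))

end SphereMCG

namespace SphereMCGAux
open SphereMCG

/-! ### Products of generators in `M n` -/

def fprod (n a k : ℕ) : M n := ((List.range' a k).map (σ n)).prod

def gprod (n a k : ℕ) : M n := ((List.range' a k).map (fun i => (σ n i)⁻¹)).prod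

lemma fprod_zero (n a : ℕ) : fprod n a 0 = 1 := rfl

lemma gprod_zero (n a : ℕ) : gprod n a 0 = 1 := rfl

lemma fprod_succ (n a k : ℕ) : fprod n a (k + 1) = σ n a * fprod n (a + 1) k := by
  simp [fprod, List.range'_succ]

lemma gprod_succ (n a k : ℕ) : gprod n a (k + 1) = (σ n a)⁻¹ * gprod n (a + 1) k := by
  simp [gprod, List.range'_succ]

lemma fprod_concat (n a k : ℕ) : fprod n a (k + 1) = fprod n a k * σ n (a + k) := by
  unfold fprod
  rw [← List.range'_append_1 (s := a) (m := k) (n := 1)]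
  simp

lemma mk_σfProd (n a b : ℕ) :
    PresentedGroup.mk (rels n) (σfProd n a b) = fprod n a (b + 1 - a) := by
  unfold σfProd fprod
  rw [map_list_prod, List.map_map]
  rfl

lemma mk_rel {n : ℕ} {r : FreeGroup (Gen n)} (h : r ∈ rels n) :
    PresentedGroup.mk (rels n) r = 1 :=
  (QuotientGroup.eq_one_iff r).mpr (Subgroup.subset_normalClosure h)

/-! ### Derived relations -/

lemma comm {n i j : ℕ} (h1 : 1 ≤ i) (h2 : i ≤ n - 1) (h3 : 1 ≤ j) (h4 : j ≤ n - 1)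
    (h5 : i + 2 ≤ j ∨ j + 2 ≤ i) : σ n i * σ n j = σ n j * σ n i := by
  have h := mk_rel (n := n) (r := σf n i * σf n j * (σf n j * σf n i)⁻¹)
    (Or.inl ⟨i, j, h1, h2, h3, h4, h5, rfl⟩)
  rw [map_mul, map_inv, map_mul, map_mul, mul_inv_eq_one] at h
  exact h

lemma braid {n i j : ℕ} (h1 : 1 ≤ i) (h2 : i ≤ n - 1) (h3 : 1 ≤ j) (h4 : j ≤ n - 1)
    (h5 : i + 1 = j ∨ j + 1 = i) : σ n i * σ n j * σ n i = σ n j * σ n i * σ n j := by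
  have h := mk_rel (n := n) (r := σf n i * σf n j * σf n i * (σf n j * σf n i * σf n j)⁻¹)
    (Or.inr (Or.inl ⟨i, j, h1, h2, h3, h4, h5, rfl⟩))
  rw [map_mul, map_inv, map_mul, map_mul, map_mul, map_mul, mul_inv_eq_one] at h
  exact h

lemma sphere1 (n : ℕ) :
    α₀ n * PresentedGroup.mk (rels n) (σfProdRev n 1 (n - 1)) = 1 := by
  have h := mk_rel (n := n) (r := σfProd n 1 (n - 1) * σfProdRev n 1 (n - 1))
    (Or.inr (Or.inr (Or.inl rfl)))
  rw [map_mul] at h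
  exact h

lemma sphere2 (n : ℕ) : (α₀ n) ^ n = 1 := by
  have h := mk_rel (n := n) (r := (σfProd n 1 (n - 1)) ^ n)
    (Or.inr (Or.inr (Or.inr rfl)))
  rw [map_pow] at h
  exact h

lemma α₀_eq_fprod (n : ℕ) : α₀ n = fprod n 1 (n - 1) := by
  have := mk_σfProd n 1 (n - 1)
  simpa [α₀] using this


/-! ### Commutation with blocks -/

lemma comm_fprod_low {n : ℕ} (i : ℕ) (h1 : 1 ≤ i) :
    ∀ k a, i + 2 ≤ a → a + k ≤ n → σ n i * fprod n a k = fprod n a k * σ n i := by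
  intro k
  induction k with
  | zero => intro a _ _; simp [fprod_zero]
  | succ k ih =>
    intro a ha hk
    rw [fprod_succ, ← mul_assoc,
      comm (n := n) (i := i) (j := a) h1 (by omega) (by omega) (by omega) (Or.inl ha),
      mul_assoc, ih (a + 1) (by omega) (by omega), mul_assoc]

lemma comm_fprod_high {n : ℕ} (j : ℕ) (h3 : 1 ≤ j) (h4 : j ≤ n - 1) :
    ∀ k a, 1 ≤ a → a + k + 1 ≤ j → σ n j * fprod n a k = fprod n a k * σ n j := by
  intro k
  induction k with
  | zero => intro a _ _; simp [fprod_zero]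
  | succ k ih =>
    intro a ha hk
    rw [fprod_succ, ← mul_assoc,
      comm (n := n) (i := j) (j := a) h3 h4 ha (by omega) (Or.inr (by omega)),
      mul_assoc, ih (a + 1) (by omega) (by omega), mul_assoc]

lemma comm_gprod_low {n : ℕ} (i : ℕ) (h1 : 1 ≤ i) :
    ∀ k a, i + 2 ≤ a → a + k ≤ n → σ n i * gprod n a k = gprod n a k * σ n i := by
  intro k
  induction k with
  | zero => intro a _ _; simp [gprod_zero]
  | succ k ih =>
    intro a ha hk
    have hc : σ n i * (σ n a)⁻¹ = (σ n a)⁻¹ * σ n i :=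
      Commute.inv_right
        (comm (n := n) (i := i) (j := a) h1 (by omega) (by omega) (by omega) (Or.inl ha))
    rw [gprod_succ, ← mul_assoc, hc, mul_assoc, ih (a + 1) (by omega) (by omega), mul_assoc]

/-! ### The shift relation -/

lemma fprod_split (n a k l : ℕ) : fprod n a (k + l) = fprod n a k * fprod n (a + k) l := by
  unfold fprod
  rw [← List.range'_append_1 (s := a) (m := k) (n := l), List.map_append,
    List.prod_append]

lemma shift {n : ℕ} (i : ℕ) (h1 : 1 ≤ i) (h2 : i + 1 ≤ n - 1) :
    α₀ n * σ n i = σ n (i + 1) * α₀ n := by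
  have e1 : α₀ n = fprod n 1 (i - 1) * fprod n i (n - i) := by
    have h := fprod_split n 1 (i - 1) (n - i)
    rw [show i - 1 + (n - i) = n - 1 by omega, show 1 + (i - 1) = i by omega] at h
    rw [α₀_eq_fprod, h]
  have e2 : fprod n i (n - i) = σ n i * (σ n (i + 1) * fprod n (i + 2) (n - 1 - (i + 1))) := by
    rw [show n - i = (n - i - 1) + 1 by omega, fprod_succ,
      show n - i - 1 = (n - i - 2) + 1 by omega, fprod_succ,
      show n - 1 - (i + 1) = n - i - 2 by omega]
  set D := fprod n 1 (i - 1) with hDdef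
  set E := fprod n (i + 2) (n - 1 - (i + 1)) with hEdef
  set x := σ n i
  set y := σ n (i + 1)
  have hsplit : α₀ n = D * (x * (y * E)) := by rw [e1, e2]
  have hE : E * x = x * E :=
    (comm_fprod_low i h1 _ _ (le_refl _) (by omega)).symm
  have hD : y * D = D * y :=
    comm_fprod_high (i + 1) (by omega) h2 _ _ (le_refl _) (by omega)
  have hb : x * y * x = y * x * y := braid h1 (by omega) (by omega) h2 (Or.inl rfl)
  have hb' : x * (y * (x * E)) = y * (x * (y * E)) := by
    have := congrArg (· * E) hb
    simpa [mul_assoc] using this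
  rw [hsplit]
  calc D * (x * (y * E)) * x
      = D * (x * (y * (E * x))) := by group
    _ = D * (x * (y * (x * E))) := by rw [hE]
    _ = D * (y * (x * (y * E))) := by rw [hb']
    _ = (y * D) * (x * (y * E)) := by rw [hD]; group
    _ = y * (D * (x * (y * E))) := by group

lemma shift_pow {n : ℕ} : ∀ (k j : ℕ), 1 ≤ j → j + k ≤ n - 1 →
    (α₀ n) ^ k * σ n j = σ n (j + k) * (α₀ n) ^ k := by
  intro k
  induction k with
  | zero => intro j _ _; simp
  | succ k ih =>
    intro j hj hk
    rw [pow_succ, mul_assoc, shift j hj (by omega), ← mul_assoc, ih (j + 1) (by omega) (by omega),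
      show j + 1 + k = j + (k + 1) by omega, mul_assoc]

lemma shift_pow_inv {n : ℕ} (k j : ℕ) (hj : 1 ≤ j) (hk : j + k ≤ n - 1) :
    (α₀ n) ^ k * (σ n j)⁻¹ = (σ n (j + k))⁻¹ * (α₀ n) ^ k := by
  have h := shift_pow (n := n) k j hj hk
  calc (α₀ n) ^ k * (σ n j)⁻¹
      = (σ n (j + k))⁻¹ * ((σ n (j + k)) * (α₀ n) ^ k) * (σ n j)⁻¹ := by group
    _ = (σ n (j + k))⁻¹ * ((α₀ n) ^ k * (σ n j)) * (σ n j)⁻¹ := by rw [h]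
    _ = (σ n (j + k))⁻¹ * (α₀ n) ^ k := by group

/-! ### `α₀` as a product of inverses -/

lemma α₀_eq_gprod (n : ℕ) : α₀ n = gprod n 1 (n - 1) := by
  have h1 := sphere1 n
  have hB : PresentedGroup.mk (rels n) (σfProdRev n 1 (n - 1)) =
      (((List.range' 1 (n - 1)).map (σ n)).reverse).prod := by
    unfold σfProdRev
    rw [map_list_prod, List.map_map, ← List.map_reverse]
    rfl
  have : α₀ n = (PresentedGroup.mk (rels n) (σfProdRev n 1 (n - 1)))⁻¹ := by
    rw [eq_inv_iff_mul_eq_one]; exact h1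
  rw [this, hB, List.prod_inv_reverse, List.map_reverse, List.reverse_reverse, List.map_map]
  rfl

/-! ### Upper bounds : `α₁ ^ (n-1) = 1` and `α₂ ^ (n-2) = 1` -/

lemma α₁_eq (n : ℕ) (hn : 5 ≤ n) : α₁ n = α₀ n * (σ n (n - 1))⁻¹ := by
  have h : fprod n 1 (n - 1) = fprod n 1 (n - 2) * σ n (n - 1) := by
    have := fprod_concat n 1 (n - 2)
    rw [show n - 2 + 1 = n - 1 by omega, show 1 + (n - 2) = n - 1 by omega] at this
    exact this
  have hα : α₁ n = fprod n 1 (n - 2) := by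
    have := mk_σfProd n 1 (n - 2)
    simpa [α₁] using this
  rw [hα, α₀_eq_fprod, h]
  group

lemma α₂_eq (n : ℕ) (hn : 5 ≤ n) : α₂ n = α₀ n * ((σ n (n - 1))⁻¹ * σ n (n - 2)) := by
  have : α₂ n = α₁ n * σ n (n - 2) := by
    show PresentedGroup.mk (rels n) _ = _
    rw [map_mul]; rfl
  rw [this, α₁_eq n hn, mul_assoc]

lemma α₁_pow (n : ℕ) (hn : 5 ≤ n) :
    ∀ m, m ≤ n - 1 → (α₀ n * (σ n (n - 1))⁻¹) ^ m = (α₀ n) ^ m * gprod n (n - m) m := by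
  intro m
  induction m with
  | zero => intro _; simp [gprod_zero]
  | succ m ih =>
    intro hm
    rw [pow_succ', ih (by omega), ← mul_assoc]
    have hts : (σ n (n - 1))⁻¹ * (α₀ n) ^ m = (α₀ n) ^ m * (σ n (n - 1 - m))⁻¹ := by
      have := shift_pow_inv (n := n) m (n - 1 - m) (by omega) (by omega)
      rw [show n - 1 - m + m = n - 1 by omega] at this
      exact this.symm
    have hg : gprod n (n - (m + 1)) (m + 1) = (σ n (n - 1 - m))⁻¹ * gprod n (n - m) m := by
      rw [show n - (m + 1) = n - 1 - m by omega, gprod_succ,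
        show n - 1 - m + 1 = n - m by omega]
    calc α₀ n * (σ n (n - 1))⁻¹ * (α₀ n) ^ m * gprod n (n - m) m
        = α₀ n * ((σ n (n - 1))⁻¹ * (α₀ n) ^ m) * gprod n (n - m) m := by group
      _ = α₀ n * ((α₀ n) ^ m * (σ n (n - 1 - m))⁻¹) * gprod n (n - m) m := by rw [hts]
      _ = (α₀ n) ^ (m + 1) * ((σ n (n - 1 - m))⁻¹ * gprod n (n - m) m) := by
          rw [pow_succ']; group
      _ = (α₀ n) ^ (m + 1) * gprod n (n - (m + 1)) (m + 1) := by rw [hg]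

lemma α₁_pow_eq_one (n : ℕ) (hn : 5 ≤ n) : (α₁ n) ^ (n - 1) = 1 := by
  have h := α₁_pow n hn (n - 1) (le_refl _)
  rw [show n - (n - 1) = 1 by omega] at h
  rw [α₁_eq n hn, h, ← α₀_eq_gprod, ← pow_succ, show n - 1 + 1 = n by omega, sphere2]

lemma α₂_pow (n : ℕ) (hn : 5 ≤ n) :
    ∀ m, m ≤ n - 2 → (α₀ n * ((σ n (n - 1))⁻¹ * σ n (n - 2))) ^ m
      = (α₀ n) ^ m * gprod n (n - m) m * fprod n (n - 1 - m) m := by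
  intro m
  induction m with
  | zero => intro _; simp [gprod_zero, fprod_zero]
  | succ m ih =>
    intro hm
    rw [pow_succ', ih (by omega)]
    have hts : (σ n (n - 2)) * (α₀ n) ^ m = (α₀ n) ^ m * σ n (n - 2 - m) := by
      have := shift_pow (n := n) m (n - 2 - m) (by omega) (by omega)
      rw [show n - 2 - m + m = n - 2 by omega] at this
      exact this.symm
    have hts' : (σ n (n - 1))⁻¹ * (α₀ n) ^ m = (α₀ n) ^ m * (σ n (n - 1 - m))⁻¹ := by
      have := shift_pow_inv (n := n) m (n - 1 - m) (by omega) (by omega)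
      rw [show n - 1 - m + m = n - 1 by omega] at this
      exact this.symm
    have hcg : σ n (n - 2 - m) * gprod n (n - m) m = gprod n (n - m) m * σ n (n - 2 - m) :=
      comm_gprod_low (n - 2 - m) (by omega) m (n - m) (by omega) (by omega)
    have hg : gprod n (n - (m + 1)) (m + 1) = (σ n (n - 1 - m))⁻¹ * gprod n (n - m) m := by
      rw [show n - (m + 1) = n - 1 - m by omega, gprod_succ,
        show n - 1 - m + 1 = n - m by omega]
    have hf : fprod n (n - 1 - (m + 1)) (m + 1) = σ n (n - 2 - m) * fprod n (n - 1 - m) m := by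
      rw [show n - 1 - (m + 1) = n - 2 - m by omega, fprod_succ,
        show n - 2 - m + 1 = n - 1 - m by omega]
    calc α₀ n * ((σ n (n - 1))⁻¹ * σ n (n - 2)) * ((α₀ n) ^ m * gprod n (n - m) m * fprod n (n - 1 - m) m)
        = α₀ n * (σ n (n - 1))⁻¹ * (σ n (n - 2) * (α₀ n) ^ m) *
            (gprod n (n - m) m * fprod n (n - 1 - m) m) := by group
      _ = α₀ n * (σ n (n - 1))⁻¹ * ((α₀ n) ^ m * σ n (n - 2 - m)) *
            (gprod n (n - m) m * fprod n (n - 1 - m) m) := by rw [hts]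
      _ = α₀ n * ((σ n (n - 1))⁻¹ * (α₀ n) ^ m) *
            (σ n (n - 2 - m) * (gprod n (n - m) m * fprod n (n - 1 - m) m)) := by group
      _ = α₀ n * ((α₀ n) ^ m * (σ n (n - 1 - m))⁻¹) *
            (σ n (n - 2 - m) * (gprod n (n - m) m * fprod n (n - 1 - m) m)) := by rw [hts']
      _ = (α₀ n) ^ (m + 1) *
            ((σ n (n - 1 - m))⁻¹ * (σ n (n - 2 - m) * gprod n (n - m) m * fprod n (n - 1 - m) m)) := by
          rw [pow_succ']; group
      _ = (α₀ n) ^ (m + 1) *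
            ((σ n (n - 1 - m))⁻¹ * (gprod n (n - m) m * σ n (n - 2 - m) * fprod n (n - 1 - m) m)) := by
          rw [hcg]
      _ = (α₀ n) ^ (m + 1) * ((σ n (n - 1 - m))⁻¹ * gprod n (n - m) m) *
            (σ n (n - 2 - m) * fprod n (n - 1 - m) m) := by group
      _ = (α₀ n) ^ (m + 1) * gprod n (n - (m + 1)) (m + 1) * fprod n (n - 1 - (m + 1)) (m + 1) := by
          rw [hg, hf]

lemma α₂_pow_eq_one (n : ℕ) (hn : 5 ≤ n) : (α₂ n) ^ (n - 2) = 1 := by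
  have h := α₂_pow n hn (n - 2) (le_refl _)
  rw [show n - (n - 2) = 2 by omega, show n - 1 - (n - 2) = 1 by omega] at h
  have hg2 : gprod n 2 (n - 2) = σ n 1 * gprod n 1 (n - 1) := by
    have := gprod_succ n 1 (n - 2)
    rw [show n - 2 + 1 = n - 1 by omega] at this
    rw [this]; group
  have hf1 : fprod n 1 (n - 2) = α₀ n * (σ n (n - 1))⁻¹ := by
    have h' : fprod n 1 (n - 1) = fprod n 1 (n - 2) * σ n (n - 1) := by
      have := fprod_concat n 1 (n - 2)
      rw [show n - 2 + 1 = n - 1 by omega, show 1 + (n - 2) = n - 1 by omega] at this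
      exact this
    rw [α₀_eq_fprod, h']; group
  have hs1 : (α₀ n) ^ (n - 2) * σ n 1 = σ n (n - 1) * (α₀ n) ^ (n - 2) := by
    have := shift_pow (n := n) (n - 2) 1 (le_refl _) (by omega)
    rw [show 1 + (n - 2) = n - 1 by omega] at this
    exact this
  rw [α₂_eq n hn, h, hg2, hf1, ← α₀_eq_gprod]
  calc (α₀ n) ^ (n - 2) * (σ n 1 * α₀ n) * (α₀ n * (σ n (n - 1))⁻¹)
      = ((α₀ n) ^ (n - 2) * σ n 1) * (α₀ n * α₀ n * (σ n (n - 1))⁻¹) := by group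
    _ = (σ n (n - 1) * (α₀ n) ^ (n - 2)) * (α₀ n * α₀ n * (σ n (n - 1))⁻¹) := by rw [hs1]
    _ = σ n (n - 1) * ((α₀ n) ^ (n - 2) * α₀ n * α₀ n) * (σ n (n - 1))⁻¹ := by group
    _ = σ n (n - 1) * (α₀ n) ^ n * (σ n (n - 1))⁻¹ := by
        rw [← pow_succ, ← pow_succ, show n - 2 + 1 + 1 = n by omega]
    _ = 1 := by rw [sphere2]; group

/-! ### The permutation representation -/

def tw (n : ℕ) : Gen n → Equiv.Perm (Fin n) :=
  fun k => Equiv.swap ⟨k.val, by have := k.2; omega⟩ ⟨k.val + 1, by have := k.2; omega⟩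

lemma lift_σf {n : ℕ} (i : ℕ) (h1 : 1 ≤ i) (h2 : i ≤ n - 1) :
    FreeGroup.lift (tw n) (σf n i) =
      Equiv.swap (⟨i - 1, by omega⟩ : Fin n) ⟨i, by omega⟩ := by
  rw [σf, dif_pos ⟨h1, h2⟩, FreeGroup.lift_apply_of]
  show Equiv.swap _ _ = _
  congr 1 <;> exact Fin.ext (by simp; omega)

lemma swap_mk_apply_val {n : ℕ} (a b : ℕ) (ha : a < n) (hb : b < n) (x : Fin n) :
    ((Equiv.swap (⟨a, ha⟩ : Fin n) ⟨b, hb⟩) x).val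
      = if x.val = a then b else if x.val = b then a else x.val := by
  rcases eq_or_ne x.val a with h | h
  · rw [if_pos h, show x = ⟨a, ha⟩ from Fin.ext h, Equiv.swap_apply_left]
  · rcases eq_or_ne x.val b with h2 | h2
    · rw [if_neg h, if_pos h2, show x = ⟨b, hb⟩ from Fin.ext h2, Equiv.swap_apply_right]
    · rw [if_neg h, if_neg h2, Equiv.swap_apply_of_ne_of_ne
        (fun hc => h (by rw [hc])) (fun hc => h2 (by rw [hc]))]

def cyc (n m : ℕ) : Equiv.Perm (Fin n) :=
  ((List.range' 1 m).map (fun i => FreeGroup.lift (tw n) (σf n i))).prod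

lemma lift_σfProd (n m : ℕ) : FreeGroup.lift (tw n) (σfProd n 1 m) = cyc n m := by
  unfold σfProd cyc
  rw [map_list_prod, List.map_map]
  rfl

lemma cyc_concat (n m : ℕ) :
    cyc n (m + 1) = cyc n m * FreeGroup.lift (tw n) (σf n (m + 1)) := by
  unfold cyc
  rw [← List.range'_append_1 (s := 1) (m := m) (n := 1)]
  simp [Nat.add_comm 1 m]

lemma cyc_apply_val {n : ℕ} : ∀ m, m ≤ n - 1 → ∀ x : Fin n,
    ((cyc n m) x).val = if x.val < m then x.val + 1 else if x.val = m then 0 else x.val := by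
  intro m
  induction m with
  | zero =>
    intro _ x
    show ((1 : Equiv.Perm (Fin n)) x).val = _
    rw [Equiv.Perm.one_apply]
    split_ifs <;> omega
  | succ m ih =>
    intro hm x
    have hsw := lift_σf (n := n) (m + 1) (by omega) hm
    simp only [Nat.add_sub_cancel] at hsw
    have hy := swap_mk_apply_val (n := n) m (m + 1) (by omega) (by omega) x
    rw [cyc_concat, Equiv.Perm.mul_apply, hsw, ih (by omega), hy]
    split_ifs <;> omega

lemma cyc_pow_val {n : ℕ} (m : ℕ) (hm : m ≤ n - 1) : ∀ (k : ℕ) (x : Fin n), x.val ≤ m →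
    ((((cyc n m)) ^ k) x).val = (x.val + k) % (m + 1) := by
  intro k
  induction k with
  | zero =>
    intro x hx
    rw [pow_zero]
    show ((1 : Equiv.Perm (Fin n)) x).val = _
    rw [Equiv.Perm.one_apply, Nat.add_zero, Nat.mod_eq_of_lt (show x.val < m + 1 by omega)]
  | succ k ih =>
    intro x hx
    rw [pow_succ', Equiv.Perm.mul_apply]
    have hyv : (((cyc n m) ^ k) x).val = (x.val + k) % (m + 1) := ih x hx
    have hmod : (x.val + k) % (m + 1) < m + 1 := Nat.mod_lt _ (by omega)
    have e1 : (x.val + (k + 1)) % (m + 1) = ((x.val + k) % (m + 1) + 1) % (m + 1) := by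
      rw [Nat.mod_add_mod, show x.val + k + 1 = x.val + (k + 1) by omega]
    rw [cyc_apply_val m hm _, hyv, e1]
    by_cases h : (x.val + k) % (m + 1) < m
    · rw [if_pos h, Nat.mod_eq_of_lt (show (x.val + k) % (m + 1) + 1 < m + 1 by omega)]
    · have h2 : (x.val + k) % (m + 1) = m := by omega
      rw [if_neg h, if_pos h2, h2, Nat.mod_self]

lemma cyc_pow_fix {n : ℕ} (m : ℕ) (hm : m ≤ n - 1) : ∀ (k : ℕ) (x : Fin n), m < x.val →
    (((cyc n m)) ^ k) x = x := by
  intro k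
  induction k with
  | zero => intro x _; simp
  | succ k ih =>
    intro x hx
    have hfix : (cyc n m) x = x := by
      apply Fin.ext
      rw [cyc_apply_val m hm x, if_neg (by omega), if_neg (by omega)]
    rw [pow_succ', Equiv.Perm.mul_apply, ih x hx, hfix]

lemma cyc_pow_eq_one {n : ℕ} (m : ℕ) (hm : m ≤ n - 1) : (cyc n m) ^ (m + 1) = 1 := by
  ext x
  rcases le_or_gt x.val m with hx | hx
  · show ((((cyc n m)) ^ (m + 1)) x).val = _
    rw [cyc_pow_val m hm (m + 1) x hx, Nat.add_mod_right, Nat.mod_eq_of_lt (by omega)]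
    rfl
  · show ((((cyc n m)) ^ (m + 1)) x).val = _
    rw [cyc_pow_fix m hm (m + 1) x hx]
    rfl

lemma orderOf_cyc {n : ℕ} (m : ℕ) (hm : m ≤ n - 1) (hn : 1 ≤ n) :
    orderOf (cyc n m) = m + 1 := by
  have h1 := cyc_pow_eq_one (n := n) m hm
  have hdvd : orderOf (cyc n m) ∣ m + 1 := orderOf_dvd_of_pow_eq_one h1
  have hpos : 0 < orderOf (cyc n m) := orderOf_pos _
  have hle : orderOf (cyc n m) ≤ m + 1 := Nat.le_of_dvd (by omega) hdvd
  rcases eq_or_lt_of_le hle with heq | hlt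
  · exact heq
  · exfalso
    have h0 : ((((cyc n m)) ^ orderOf (cyc n m)) (⟨0, by omega⟩ : Fin n)).val
        = orderOf (cyc n m) := by
      rw [cyc_pow_val m hm (orderOf (cyc n m)) ⟨0, by omega⟩ (Nat.zero_le m), Nat.zero_add,
        Nat.mod_eq_of_lt (by omega)]
    rw [pow_orderOf_eq_one] at h0
    simp only [Equiv.Perm.one_apply] at h0
    omega

/-! ### Verifying the relations in the symmetric group -/

lemma swap_comm_disj {β : Type*} [DecidableEq β] {a b c d : β}
    (h1 : a ≠ c) (h2 : a ≠ d) (h3 : b ≠ c) (h4 : b ≠ d) :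
    Equiv.swap a b * Equiv.swap c d = Equiv.swap c d * Equiv.swap a b := by
  have h : Equiv.swap c d = Equiv.swap a b * Equiv.swap c d * (Equiv.swap a b)⁻¹ := by
    have := Equiv.swap_apply_apply (Equiv.swap a b) c d
    rw [Equiv.swap_apply_of_ne_of_ne h1.symm h3.symm,
      Equiv.swap_apply_of_ne_of_ne h2.symm h4.symm] at this
    exact this
  conv_rhs => rw [h]
  group

lemma swap_braid {β : Type*} [DecidableEq β] {a b c : β}
    (hab : a ≠ b) (hac : a ≠ c) (hbc : b ≠ c) :
    Equiv.swap a b * Equiv.swap b c * Equiv.swap a b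
      = Equiv.swap b c * Equiv.swap a b * Equiv.swap b c := by
  have h1 : Equiv.swap a b * Equiv.swap b c * Equiv.swap a b = Equiv.swap a c := by
    have := Equiv.swap_apply_apply (Equiv.swap a b) b c
    rw [Equiv.swap_apply_right, Equiv.swap_apply_of_ne_of_ne hac.symm hbc.symm,
      Equiv.swap_inv] at this
    exact this.symm
  have h2 : Equiv.swap b c * Equiv.swap a b * Equiv.swap b c = Equiv.swap a c := by
    have := Equiv.swap_apply_apply (Equiv.swap b c) a b
    rw [Equiv.swap_apply_of_ne_of_ne hab hac, Equiv.swap_apply_left,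
      Equiv.swap_inv] at this
    exact this.symm
  rw [h1, h2]

lemma fin_mk_ne {n a b : ℕ} (ha : a < n) (hb : b < n) (h : a ≠ b) :
    (⟨a, ha⟩ : Fin n) ≠ ⟨b, hb⟩ :=
  fun hc => h (congrArg Fin.val hc)

lemma lift_σfProdRev {n : ℕ} (hn : 5 ≤ n) :
    FreeGroup.lift (tw n) (σfProdRev n 1 (n - 1)) = (cyc n (n - 1))⁻¹ := by
  unfold σfProdRev
  simp only [Nat.add_sub_cancel]
  rw [map_list_prod, List.map_map, List.map_reverse, List.prod_reverse_noncomm]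
  congr 1
  rw [List.map_map]
  unfold cyc
  refine congrArg List.prod (List.map_congr_left ?_)
  intro i hi
  rw [List.mem_range'_1] at hi
  show (FreeGroup.lift (tw n) (σf n i))⁻¹ = _
  rw [lift_σf i hi.1 (by omega)]
  exact Equiv.swap_inv _ _

lemma lift_rels {n : ℕ} (hn : 5 ≤ n) : ∀ r ∈ rels n, FreeGroup.lift (tw n) r = 1 := by
  intro r hr
  rcases hr with ⟨i, j, h1, h2, h3, h4, h5, rfl⟩ | ⟨i, j, h1, h2, h3, h4, h5, rfl⟩ | rfl | rfl
  · rw [map_mul, map_inv, map_mul, map_mul, mul_inv_eq_one, lift_σf i h1 h2, lift_σf j h3 h4]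
    exact swap_comm_disj (fin_mk_ne _ _ (by omega)) (fin_mk_ne _ _ (by omega))
      (fin_mk_ne _ _ (by omega)) (fin_mk_ne _ _ (by omega))
  · rw [map_mul, map_inv, map_mul, map_mul, map_mul, map_mul, mul_inv_eq_one,
      lift_σf i h1 h2, lift_σf j h3 h4]
    rcases h5 with h5 | h5
    · subst h5
      exact swap_braid (fin_mk_ne _ _ (by omega)) (fin_mk_ne _ _ (by omega))
        (fin_mk_ne _ _ (by omega))
    · subst h5
      exact (swap_braid (fin_mk_ne _ _ (by omega)) (fin_mk_ne _ _ (by omega))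
        (fin_mk_ne _ _ (by omega))).symm
  · rw [map_mul, lift_σfProd, lift_σfProdRev hn, mul_inv_cancel]
  · rw [map_pow, lift_σfProd]
    have h := cyc_pow_eq_one (n := n) (n - 1) le_rfl
    rw [show n - 1 + 1 = n by omega] at h
    exact h

/-! ### The homomorphism and the final computation -/

def φh (n : ℕ) (hn : 5 ≤ n) : M n →* Equiv.Perm (Fin n) :=
  PresentedGroup.toGroup (lift_rels hn)

lemma φh_mk (n : ℕ) (hn : 5 ≤ n) (w : FreeGroup (Gen n)) :
    φh n hn (PresentedGroup.mk (rels n) w) = FreeGroup.lift (tw n) w := rfl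

lemma φh_α₀ (n : ℕ) (hn : 5 ≤ n) : φh n hn (α₀ n) = cyc n (n - 1) := by
  rw [α₀, φh_mk, lift_σfProd]

lemma φh_α₁ (n : ℕ) (hn : 5 ≤ n) : φh n hn (α₁ n) = cyc n (n - 2) := by
  rw [α₁, φh_mk, lift_σfProd]

lemma φh_α₂ (n : ℕ) (hn : 5 ≤ n) : φh n hn (α₂ n) = cyc n (n - 3) := by
  rw [α₂, φh_mk, map_mul, lift_σfProd]
  have hc : cyc n (n - 2) = cyc n (n - 3) * FreeGroup.lift (tw n) (σf n (n - 2)) := by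
    have := cyc_concat n (n - 3)
    rw [show n - 3 + 1 = n - 2 by omega] at this
    exact this
  have hsq : FreeGroup.lift (tw n) (σf n (n - 2)) * FreeGroup.lift (tw n) (σf n (n - 2)) = 1 := by
    rw [lift_σf (n - 2) (by omega) (by omega)]
    exact Equiv.swap_mul_self _ _
  rw [hc, mul_assoc, hsq, mul_one]

theorem main (n : ℕ) (hn : 5 ≤ n) :
    orderOf (α₀ n) = n ∧ orderOf (α₁ n) = n - 1 ∧ orderOf (α₂ n) = n - 2 := by
  refine ⟨?_, ?_, ?_⟩
  · have hφ : orderOf (φh n hn (α₀ n)) = n := by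
      rw [φh_α₀, orderOf_cyc (n - 1) le_rfl (by omega)]
      omega
    have hd := orderOf_map_dvd (φh n hn) (α₀ n)
    rw [hφ] at hd
    exact Nat.dvd_antisymm (orderOf_dvd_of_pow_eq_one (sphere2 n)) hd
  · have hφ : orderOf (φh n hn (α₁ n)) = n - 1 := by
      rw [φh_α₁, orderOf_cyc (n - 2) (by omega) (by omega)]
      omega
    have hd := orderOf_map_dvd (φh n hn) (α₁ n)
    rw [hφ] at hd
    exact Nat.dvd_antisymm (orderOf_dvd_of_pow_eq_one (α₁_pow_eq_one n hn)) hd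
  · have hφ : orderOf (φh n hn (α₂ n)) = n - 2 := by
      rw [φh_α₂, orderOf_cyc (n - 3) (by omega) (by omega)]
      omega
    have hd := orderOf_map_dvd (φh n hn) (α₂ n)
    rw [hφ] at hd
    exact Nat.dvd_antisymm (orderOf_dvd_of_pow_eq_one (α₂_pow_eq_one n hn)) hd

end SphereMCGAux


open SphereMCG in
/-- For `n ≥ 5`, in the mapping class group of the `n`-punctured sphere, `α₀` has
order `n`, `α₁` has order `n - 1` and `α₂` has order `n - 2`. -/
theorem orders_of_periodic_elements (n : ℕ) (hn : 5 ≤ n) :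
    orderOf (α₀ n) = n ∧ orderOf (α₁ n) = n - 1 ∧ orderOf (α₂ n) = n - 2 := by
  exact SphereMCGAux.main n hn
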